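/- Let M, L ≥ 1 and set N = M·L + 1. There exist a diagonal matrix Λ ∈ ℂ^{N×N} and a matrix B ∈ ℂ^{N×(M+1)} such that, encoding each token v_k ∈ ℝ^M as u_k = (1, v_k) ∈ ℝ^{M+1} and running the linear RNN x₀ = 0, x_k = Λ x_{k−1} + B u_k, the following two properties hold: (i) the first coordinate of x_k equals k for every k ∈ {1,…,L} and every input sequence; (ii) the hidden state determines both the timestamp and the entire past, i.e. if the state x_k produced from input sequence v equals the state x_j produced from input sequence v′, for j, k ∈ {1, …, L}, then k = j and (v₁, …, v_k) = (v′₁, …, v′_k). -/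

import Mathlib

open Matrix BigOperators

/-- Hidden states of a linear diagonal RNN with eigenvalues `lam`, input matrix `B`,
and (complex-valued) input sequence `u` (the input at step `k ≥ 1` is `u k`):
`x 0 = 0`, `x (k+1) = Λ x k + B u (k+1)`. -/
noncomputable def rnnStateM {N M : ℕ} (lam : Fin N → ℂ) (B : Matrix (Fin N) (Fin M) ℂ)
    (u : ℕ → Fin M → ℂ) : ℕ → Fin N → ℂ
  | 0 => 0
  | k + 1 => fun i => lam i * rnnStateM lam B u k i + B.mulVec (u (k + 1)) i

/-- The encoder `e(v) = (1, v) ∈ ℝ^{M+1}` applied to a token sequence `v`, viewed as a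
complex-valued input sequence (the token at step `m ≥ 1` is `v m`). -/
noncomputable def encInput {M : ℕ} (v : ℕ → Fin M → ℝ) : ℕ → Fin (M + 1) → ℂ :=
  fun m => Fin.cons 1 (fun i => ((v m i : ℝ) : ℂ))

/-- Closed form for the RNN state. -/
lemma rnnStateM_formula {N M : ℕ} (lam : Fin N → ℂ) (B : Matrix (Fin N) (Fin M) ℂ)
    (u : ℕ → Fin M → ℂ) (k : ℕ) (i : Fin N) :
    rnnStateM lam B u k i
      = ∑ m ∈ Finset.range k, lam i ^ (k - 1 - m) * B.mulVec (u (m + 1)) i := by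
  induction k with
  | zero => simp [rnnStateM]
  | succ k ih =>
    rw [show rnnStateM lam B u (k+1) i
        = lam i * rnnStateM lam B u k i + B.mulVec (u (k+1)) i from rfl, ih,
      Finset.sum_range_succ, Finset.mul_sum]
    simp only [Nat.add_sub_cancel, Nat.sub_self, pow_zero, one_mul]
    congr 1
    refine Finset.sum_congr rfl fun m hm => ?_
    rw [Finset.mem_range] at hm
    rw [← mul_assoc, ← pow_succ']
    congr 2
    omega

/-- For `M, L ≥ 1` and hidden dimension `N = M·L + 1`, there exist a
diagonal matrix `Λ = diag(lam) ∈ ℂ^{N×N}` and `B ∈ ℂ^{N×(M+1)}` such that, encoding each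
token `v_k ∈ ℝ^M` as `u_k = (1, v_k)` and running the linear RNN `x₀ = 0`,
`x_k = Λ x_{k-1} + B u_k`:
(i) the first coordinate of `x_k` equals `k` for every `k ∈ {1, …, L}`;
(ii) the hidden state determines the timestamp and the entire past: if the state at time `k`
from inputs `v` equals the state at time `j` from inputs `v'` (with `j, k ∈ {1, …, L}`),
then `k = j` and the prefixes `(v₁, …, v_k)` and `(v′₁, …, v′_k)` coincide. -/
theorem linear_rnn_time_aware_memory (M L : ℕ) (hM : 1 ≤ M) (hL : 1 ≤ L) :
    ∃ (lam : Fin (M * L + 1) → ℂ) (B : Matrix (Fin (M * L + 1)) (Fin (M + 1)) ℂ),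
      -- (i) the first state coordinate is a counter
      (∀ (v : ℕ → Fin M → ℝ) (k : ℕ), 1 ≤ k → k ≤ L →
        rnnStateM lam B (encInput v) k 0 = (k : ℂ))
      ∧
      -- (ii) the state determines the timestamp and the whole past
      (∀ (v v' : ℕ → Fin M → ℝ) (k j : ℕ), 1 ≤ k → k ≤ L → 1 ≤ j → j ≤ L →
        rnnStateM lam B (encInput v) k = rnnStateM lam B (encInput v') j →
        k = j ∧ ∀ m : ℕ, 1 ≤ m → m ≤ k → v m = v' m) := by
  classical
  -- the eigenvalues: 1 on the counter coordinate, node ((i-1)/M) elsewhere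
  set lam : Fin (M * L + 1) → ℂ :=
    fun i => if i.val = 0 then 1 else (((i.val - 1) / M : ℕ) : ℂ) with hlam
  -- each row of B selects one input coordinate
  set target : Fin (M * L + 1) → Fin (M + 1) :=
    fun i => if h : i.val = 0 then 0
      else ⟨(i.val - 1) % M + 1, by have := Nat.mod_lt (i.val - 1) (show 0 < M by omega); omega⟩
    with htarget
  set B : Matrix (Fin (M * L + 1)) (Fin (M + 1)) ℂ :=
    Matrix.of (fun i j => if j = target i then 1 else 0) with hB
  have hmulVec : ∀ (u : Fin (M + 1) → ℂ) (i : Fin (M * L + 1)),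
      B.mulVec u i = u (target i) := by
    intro u i
    simp [hB, Matrix.mulVec, dotProduct, ite_mul, Finset.sum_ite_eq']
  have hmul0 : ∀ (v : ℕ → Fin M → ℝ) (m : ℕ) (i : Fin (M * L + 1)), i.val = 0 →
      B.mulVec (encInput v m) i = 1 := by
    intro v m i hi
    rw [hmulVec]
    simp [htarget, hi, encInput, show i = 0 from Fin.ext hi]
  have hmulc : ∀ (v : ℕ → Fin M → ℝ) (m : ℕ) (i : Fin (M * L + 1)) (hi : i.val ≠ 0)
      (c : Fin M), (i.val - 1) % M = c.val →
      B.mulVec (encInput v m) i = ((v m c : ℝ) : ℂ) := by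
    intro v m i hi c hc
    rw [hmulVec]
    have : target i = Fin.succ ⟨c.val, c.isLt⟩ := by
      simp only [htarget, dif_neg hi]
      apply Fin.ext
      simp [hc]
    rw [this]
    simp [encInput, Fin.cons_succ]
  -- Part (i): the counter
  have counter : ∀ (v : ℕ → Fin M → ℝ) (k : ℕ),
      rnnStateM lam B (encInput v) k 0 = (k : ℂ) := by
    intro v k
    rw [rnnStateM_formula]
    have h0 : (0 : Fin (M * L + 1)).val = 0 := rfl
    calc ∑ m ∈ Finset.range k, lam 0 ^ (k - 1 - m) * B.mulVec (encInput v (m + 1)) 0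
        = ∑ m ∈ Finset.range k, 1 := by
          refine Finset.sum_congr rfl fun m hm => ?_
          rw [hmul0 v (m+1) 0 h0]
          simp [hlam, h0]
      _ = (k : ℂ) := by simp
  refine ⟨lam, B, fun v k _ _ => counter v k, ?_⟩
  intro v v' k j hk1 hkL hj1 hjL h
  -- timestamps agree
  have hkj : k = j := by
    have := congrFun h 0
    rw [counter, counter] at this
    exact_mod_cast this
  subst hkj
  refine ⟨rfl, fun m hm1 hmk => ?_⟩
  funext c
  -- the difference sequence on channel c
  set d : ℕ → ℂ := fun m' => ((v m' c : ℝ) : ℂ) - ((v' m' c : ℝ) : ℂ) with hd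
  -- coordinates storing channel c
  have hidx : ∀ l : Fin L, 1 + c.val + M * l.val < M * L + 1 := by
    intro l
    have h1 : M * l.val + M ≤ M * L := by
      calc M * l.val + M = M * (l.val + 1) := by ring
        _ ≤ M * L := Nat.mul_le_mul_left M l.isLt
    have := c.isLt
    omega
  -- key equations at the channel coordinates
  have key : ∀ l : Fin L,
      ∑ t ∈ Finset.range k, ((l.val : ℂ)) ^ t * d (k - t) = 0 := by
    intro l
    set i : Fin (M * L + 1) := ⟨1 + c.val + M * l.val, hidx l⟩ with hi
    have hne : i.val ≠ 0 := by simp [hi]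
    have hmod : (i.val - 1) % M = c.val := by
      simp only [hi]
      rw [show 1 + c.val + M * l.val - 1 = c.val + M * l.val by omega,
        Nat.add_mul_mod_self_left, Nat.mod_eq_of_lt c.isLt]
    have hdiv : (i.val - 1) / M = l.val := by
      simp only [hi]
      rw [show 1 + c.val + M * l.val - 1 = c.val + M * l.val by omega,
        Nat.add_mul_div_left _ _ (show 0 < M by omega), Nat.div_eq_of_lt c.isLt]
      omega
    have hlami : lam i = ((l.val : ℕ) : ℂ) := by simp [hlam, hne, hdiv, show i ≠ 0 from fun h0 => hne (by rw [h0]; rfl)]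
    have heq := congrFun h i
    rw [rnnStateM_formula, rnnStateM_formula] at heq
    have hz : ∑ m' ∈ Finset.range k, (l.val : ℂ) ^ (k - 1 - m') * d (m' + 1) = 0 := by
      have : ∀ (w : ℕ → Fin M → ℝ),
          ∑ m' ∈ Finset.range k, lam i ^ (k - 1 - m') * B.mulVec (encInput w (m' + 1)) i
          = ∑ m' ∈ Finset.range k, (l.val : ℂ) ^ (k - 1 - m') * ((w (m' + 1) c : ℝ) : ℂ) := by
        intro w
        refine Finset.sum_congr rfl fun m' _ => ?_
        rw [hmulc w (m' + 1) i hne c hmod, hlami]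
      rw [this v, this v'] at heq
      simp only [hd, mul_sub, Finset.sum_sub_distrib, sub_eq_zero]
      exact heq
    calc ∑ t ∈ Finset.range k, (l.val : ℂ) ^ t * d (k - t)
        = ∑ t ∈ Finset.range k, (l.val : ℂ) ^ (k - 1 - t) * d (k - (k - 1 - t)) :=
          (Finset.sum_range_reflect (fun t => (l.val : ℂ) ^ t * d (k - t)) k).symm
      _ = ∑ m' ∈ Finset.range k, (l.val : ℂ) ^ (k - 1 - m') * d (m' + 1) := by
          refine Finset.sum_congr rfl fun t ht => ?_
          rw [Finset.mem_range] at ht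
          rw [show k - (k - 1 - t) = t + 1 by omega]
      _ = 0 := hz
  -- apply Vandermonde-type vanishing to conclude the difference vector is zero
  have hzero : (fun t : Fin k => d (k - t.val)) = 0 := by
    apply Matrix.eq_zero_of_forall_index_sum_pow_mul_eq_zero
      (f := fun t : Fin k => ((t.val : ℕ) : ℂ))
    · intro a b hab
      simp only at hab
      apply Fin.ext
      exact_mod_cast hab
    · intro t
      have hlt : t.val < L := lt_of_lt_of_le t.isLt hkL
      have := key ⟨t.val, hlt⟩
      rwa [← Fin.sum_univ_eq_sum_range (fun s => ((t.val : ℂ)) ^ s * d (k - s)) k] at this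
  have hdm : d m = 0 := by
    have hlt : k - m < k := by omega
    have := congrFun hzero ⟨k - m, hlt⟩
    simpa [show k - (k - m) = m by omega] using this
  have : ((v m c : ℝ) : ℂ) = ((v' m c : ℝ) : ℂ) := by
    have := sub_eq_zero.mp hdm
    exact this
  exact_mod_cast this
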